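/- There exists a Borel set A ⊆ ℝ such that A is not both meager and null (i.e., A ∉ 𝒩 ∩ ℳ), but for every closed set C ⊆ ℝ with C \ A both meager and null, the set C itself is both meager and null. -/

import Mathlib

/-! Take `A` to be the Liouville numbers: a comeagre, hence non-meagre, Gδ set of measure zero.
If a closed `C` is null off `A`, it is null, and a closed null set is nowhere dense. -/

open MeasureTheory

theorem IsClosed.measure_eq_zero_and_isMeagre_of_measure_sdiff_eq_zero {X : Type*}
    [TopologicalSpace X] [MeasurableSpace X] {μ : Measure X} [μ.IsOpenPosMeasure]
    {A C : Set X} (hC : IsClosed C) (hA : μ A = 0) (hCA : μ (C \ A) = 0) :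
    μ C = 0 ∧ IsMeagre C := by
  have hC_null : μ C = 0 :=
    measure_mono_null (Set.subset_sdiff_union C A) (measure_union_null hCA hA)
  exact ⟨hC_null, (IsNowhereDense.of_isClosed_null hC hC_null).isMeagre⟩

theorem stmt7 : ∃ A : Set ℝ, MeasurableSet A ∧
    ¬ (MeasureTheory.volume A = 0 ∧ IsMeagre A) ∧
    ∀ C : Set ℝ, IsClosed C →
      (MeasureTheory.volume (C \ A) = 0 ∧ IsMeagre (C \ A)) →
      (MeasureTheory.volume C = 0 ∧ IsMeagre C) := by
  refine ⟨{x | Liouville x}, IsGδ.setOfPred_liouville.measurableSet, ?_, ?_⟩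
  · exact fun ⟨_, h_meagre⟩ ↦ not_isMeagre_of_mem_residual eventually_residual_liouville h_meagre
  · rintro C hC ⟨hCA, -⟩
    exact hC.measure_eq_zero_and_isMeagre_of_measure_sdiff_eq_zero volume_setOfPred_liouville hCA
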